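/- Suppose for each t and each belief π in a finite belief set, the fixed-point equation γ̃^f ∈ BR̄_t^f(π, γ̃^l) together with γ̃^l ∈ argmax over leader prescriptions admits at least one solution, and set θ_t[π] = (γ̃_t^l, γ̃_t^f). Then the forward recursion µ_1^i(x) = Q^i(x), σ̃_t^i(a_t^i | a_{1:t-1}, x_{1:t}^i) = θ_t^i[µ_t[a_{1:t-1}]](a_t^i | x_t^i), µ_{t+1}^i[a_{1:t}] = F^i(µ_t^i[a_{1:t-1}], θ_t^i[µ_t[a_{1:t-1}]], a_t) produces well-defined behavioral strategies σ̃^i and a belief system µ such that: (a) σ̃_t^i depends on the private history x_{1:t}^i only through x_t^i; (b) the beliefs µ_t[a_{1:t-1}] are product measures for every action history a_{1:t-1} (on-path or off-path); and (c) µ is consistent with Bayes rule wherever the denominator of the Bayes update is positive. -/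
import Mathlib


open Finset
open scoped Classical

noncomputable section

/-- One-step update of the joint belief, given the stage prescriptions and the realized
action; Bayes rule when the action has positive probability, off-path extension
(marginalizing over the kernels) otherwise. -/
def Fjoint {Xl Xf Al Af : Type} [Fintype Xl] [Fintype Xf]
    (Ql : Xl → Al × Af → Xl → ℝ) (Qf : Xf → Al × Af → Xf → ℝ)
    (π : Xl × Xf → ℝ) (gl : Xl → Al → ℝ) (gf : Xf → Af → ℝ) (u : Al × Af) :
    Xl × Xf → ℝ :=
  if 0 < ∑ x : Xl × Xf, π x * gl x.1 u.1 * gf x.2 u.2 then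
    fun x' => (∑ x : Xl × Xf, π x * gl x.1 u.1 * gf x.2 u.2 *
        Ql x.1 u x'.1 * Qf x.2 u x'.2) /
      (∑ x : Xl × Xf, π x * gl x.1 u.1 * gf x.2 u.2)
  else
    fun x' => ∑ x : Xl × Xf, π x * Ql x.1 u x'.1 * Qf x.2 u x'.2

/-- Forward recursion of joint beliefs along an action history. -/
def μjoint {Xl Xf Al Af : Type} [Fintype Xl] [Fintype Xf]
    (Ql : Xl → Al × Af → Xl → ℝ) (Qf : Xf → Al × Af → Xf → ℝ)
    (θl : ℕ → (Xl × Xf → ℝ) → Xl → Al → ℝ)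
    (θf : ℕ → (Xl × Xf → ℝ) → Xf → Af → ℝ)
    (Q1l : Xl → ℝ) (Q1f : Xf → ℝ) (a : ℕ → Al × Af) : ℕ → Xl × Xf → ℝ
  | 0 => fun x => Q1l x.1 * Q1f x.2
  | t + 1 => Fjoint Ql Qf (μjoint Ql Qf θl θf Q1l Q1f a t)
      (θl t (μjoint Ql Qf θl θf Q1l Q1f a t))
      (θf t (μjoint Ql Qf θl θf Q1l Q1f a t)) (a t)

lemma sum_prod_split {Xl Xf : Type} [Fintype Xl] [Fintype Xf]
    (A : Xl → ℝ) (B : Xf → ℝ) :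
    ∑ x : Xl × Xf, A x.1 * B x.2 = (∑ xl, A xl) * (∑ xf, B xf) := by
  rw [Fintype.sum_prod_type, Finset.sum_mul_sum]

lemma Fjoint_product {Xl Xf Al Af : Type} [Fintype Xl] [Fintype Xf]
    (Ql : Xl → Al × Af → Xl → ℝ) (Qf : Xf → Al × Af → Xf → ℝ)
    (hQl : ∀ x u, (∀ x', 0 ≤ Ql x u x') ∧ ∑ x', Ql x u x' = 1)
    (hQf : ∀ x u, (∀ x', 0 ≤ Qf x u x') ∧ ∑ x', Qf x u x' = 1)
    (pl : Xl → ℝ) (pf : Xf → ℝ)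
    (hpl : (∀ xl, 0 ≤ pl xl) ∧ ∑ xl, pl xl = 1)
    (hpf : (∀ xf, 0 ≤ pf xf) ∧ ∑ xf, pf xf = 1)
    (gl : Xl → Al → ℝ) (gf : Xf → Af → ℝ)
    (hgl : ∀ xl al, 0 ≤ gl xl al) (hgf : ∀ xf af, 0 ≤ gf xf af) (u : Al × Af) :
    ∃ (pl' : Xl → ℝ) (pf' : Xf → ℝ),
      ((∀ xl, 0 ≤ pl' xl) ∧ ∑ xl, pl' xl = 1) ∧
      ((∀ xf, 0 ≤ pf' xf) ∧ ∑ xf, pf' xf = 1) ∧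
      ∀ x' : Xl × Xf,
        Fjoint Ql Qf (fun x => pl x.1 * pf x.2) gl gf u x' = pl' x'.1 * pf' x'.2 := by
  set Sl := ∑ xl, pl xl * gl xl u.1 with hSl
  set Sf := ∑ xf, pf xf * gf xf u.2 with hSf
  have hden : (∑ x : Xl × Xf, (pl x.1 * pf x.2) * gl x.1 u.1 * gf x.2 u.2) = Sl * Sf := by
    rw [hSl, hSf, ← sum_prod_split]
    exact Finset.sum_congr rfl fun x _ => by ring
  unfold Fjoint
  by_cases hpos : 0 < ∑ x : Xl × Xf, (pl x.1 * pf x.2) * gl x.1 u.1 * gf x.2 u.2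
  · rw [if_pos hpos]
    have hSlnn : 0 ≤ Sl := Finset.sum_nonneg fun xl _ => mul_nonneg (hpl.1 xl) (hgl xl u.1)
    have hSfnn : 0 ≤ Sf := Finset.sum_nonneg fun xf _ => mul_nonneg (hpf.1 xf) (hgf xf u.2)
    have hSS : 0 < Sl * Sf := hden ▸ hpos
    have hSlpos : 0 < Sl := by
      rcases hSlnn.lt_or_eq with h | h
      · exact h
      · exfalso; rw [← h] at hSS; simp at hSS
    have hSfpos : 0 < Sf := by
      rcases hSfnn.lt_or_eq with h | h
      · exact h
      · exfalso; rw [← h] at hSS; simp at hSS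
    refine ⟨fun xl' => (∑ xl, pl xl * gl xl u.1 * Ql xl u xl') / Sl,
            fun xf' => (∑ xf, pf xf * gf xf u.2 * Qf xf u xf') / Sf,
            ⟨fun xl' => div_nonneg (Finset.sum_nonneg fun xl _ =>
              mul_nonneg (mul_nonneg (hpl.1 xl) (hgl xl u.1)) ((hQl xl u).1 xl')) hSlnn, ?_⟩,
            ⟨fun xf' => div_nonneg (Finset.sum_nonneg fun xf _ =>
              mul_nonneg (mul_nonneg (hpf.1 xf) (hgf xf u.2)) ((hQf xf u).1 xf')) hSfnn, ?_⟩,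
            ?_⟩
    · rw [← Finset.sum_div, Finset.sum_comm]
      have : ∀ xl ∈ (Finset.univ : Finset Xl),
          (∑ xl' : Xl, pl xl * gl xl u.1 * Ql xl u xl') = pl xl * gl xl u.1 := by
        intro xl _
        rw [← Finset.mul_sum, (hQl xl u).2, mul_one]
      rw [Finset.sum_congr rfl this, ← hSl, div_self hSlpos.ne']
    · rw [← Finset.sum_div, Finset.sum_comm]
      have : ∀ xf ∈ (Finset.univ : Finset Xf),
          (∑ xf' : Xf, pf xf * gf xf u.2 * Qf xf u xf') = pf xf * gf xf u.2 := by
        intro xf _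
        rw [← Finset.mul_sum, (hQf xf u).2, mul_one]
      rw [Finset.sum_congr rfl this, ← hSf, div_self hSfpos.ne']
    · intro x'
      have hnum : (∑ x : Xl × Xf, (pl x.1 * pf x.2) * gl x.1 u.1 * gf x.2 u.2 *
            Ql x.1 u x'.1 * Qf x.2 u x'.2)
          = (∑ xl, pl xl * gl xl u.1 * Ql xl u x'.1) *
            (∑ xf, pf xf * gf xf u.2 * Qf xf u x'.2) := by
        rw [← sum_prod_split]
        exact Finset.sum_congr rfl fun x _ => by ring
      rw [hnum, hden]
      field_simp
      try ring
  · rw [if_neg hpos]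
    refine ⟨fun xl' => ∑ xl, pl xl * Ql xl u xl',
            fun xf' => ∑ xf, pf xf * Qf xf u xf',
            ⟨fun xl' => Finset.sum_nonneg fun xl _ =>
              mul_nonneg (hpl.1 xl) ((hQl xl u).1 xl'), ?_⟩,
            ⟨fun xf' => Finset.sum_nonneg fun xf _ =>
              mul_nonneg (hpf.1 xf) ((hQf xf u).1 xf'), ?_⟩,
            ?_⟩
    · rw [Finset.sum_comm]
      have : ∀ xl ∈ (Finset.univ : Finset Xl),
          (∑ xl' : Xl, pl xl * Ql xl u xl') = pl xl := by
        intro xl _; rw [← Finset.mul_sum, (hQl xl u).2, mul_one]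
      rw [Finset.sum_congr rfl this, hpl.2]
    · rw [Finset.sum_comm]
      have : ∀ xf ∈ (Finset.univ : Finset Xf),
          (∑ xf' : Xf, pf xf * Qf xf u xf') = pf xf := by
        intro xf _; rw [← Finset.mul_sum, (hQf xf u).2, mul_one]
      rw [Finset.sum_congr rfl this, hpf.2]
    · intro x'
      rw [← sum_prod_split]
      exact Finset.sum_congr rfl fun x _ => by ring

/-- well-definedness and structural properties of the forward recursion.
Given an equilibrium generating function `θ` (prescriptions at every belief), the forward
recursion produces (a) well-defined behavioral strategies which depend on the private history
only through the current type, (b) beliefs that are product measures after every (on- or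
off-path) action history, and (c) beliefs consistent with Bayes rule whenever the Bayes
denominator is positive. -/
theorem forward_recursion_well_defined
    {Xl Xf Al Af : Type} [Fintype Xl] [Fintype Xf] [Fintype Al] [Fintype Af]
    (Ql : Xl → Al × Af → Xl → ℝ) (Qf : Xf → Al × Af → Xf → ℝ)
    (θl : ℕ → (Xl × Xf → ℝ) → Xl → Al → ℝ)
    (θf : ℕ → (Xl × Xf → ℝ) → Xf → Af → ℝ)
    (Q1l : Xl → ℝ) (Q1f : Xf → ℝ)
    (hQ1l : (∀ x, 0 ≤ Q1l x) ∧ ∑ x, Q1l x = 1)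
    (hQ1f : (∀ x, 0 ≤ Q1f x) ∧ ∑ x, Q1f x = 1)
    (hQl : ∀ x u, (∀ x', 0 ≤ Ql x u x') ∧ ∑ x', Ql x u x' = 1)
    (hQf : ∀ x u, (∀ x', 0 ≤ Qf x u x') ∧ ∑ x', Qf x u x' = 1)
    (hθl : ∀ t π xl, (∀ al, 0 ≤ θl t π xl al) ∧ ∑ al, θl t π xl al = 1)
    (hθf : ∀ t π xf, (∀ af, 0 ≤ θf t π xf af) ∧ ∑ af, θf t π xf af = 1) :
    -- (a) the constructed behavioral strategies are probability distributions and depend on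
    -- the private type history only through the current type (by construction they read
    -- only `xfh t`, resp. `xlh t`)
    (∀ t (a : ℕ → Al × Af) (xfh : ℕ → Xf),
      (∀ af, 0 ≤ θf t (μjoint Ql Qf θl θf Q1l Q1f a t) (xfh t) af) ∧
      (∑ af, θf t (μjoint Ql Qf θl θf Q1l Q1f a t) (xfh t) af) = 1 ∧
      ∀ xfh' : ℕ → Xf, xfh t = xfh' t →
        ∀ af, θf t (μjoint Ql Qf θl θf Q1l Q1f a t) (xfh t) af
          = θf t (μjoint Ql Qf θl θf Q1l Q1f a t) (xfh' t) af) ∧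
    (∀ t (a : ℕ → Al × Af) (xlh : ℕ → Xl),
      (∀ al, 0 ≤ θl t (μjoint Ql Qf θl θf Q1l Q1f a t) (xlh t) al) ∧
      (∑ al, θl t (μjoint Ql Qf θl θf Q1l Q1f a t) (xlh t) al) = 1 ∧
      ∀ xlh' : ℕ → Xl, xlh t = xlh' t →
        ∀ al, θl t (μjoint Ql Qf θl θf Q1l Q1f a t) (xlh t) al
          = θl t (μjoint Ql Qf θl θf Q1l Q1f a t) (xlh' t) al) ∧
    -- (b) the beliefs are product measures after every action history
    (∀ t (a : ℕ → Al × Af), ∃ (pl : Xl → ℝ) (pf : Xf → ℝ),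
      ((∀ xl, 0 ≤ pl xl) ∧ ∑ xl, pl xl = 1) ∧
      ((∀ xf, 0 ≤ pf xf) ∧ ∑ xf, pf xf = 1) ∧
      ∀ x : Xl × Xf, μjoint Ql Qf θl θf Q1l Q1f a t x = pl x.1 * pf x.2) ∧
    -- (c) Bayes consistency wherever the Bayes denominator is positive
    (∀ t (a : ℕ → Al × Af),
      0 < (∑ x : Xl × Xf, μjoint Ql Qf θl θf Q1l Q1f a t x *
          θl t (μjoint Ql Qf θl θf Q1l Q1f a t) x.1 (a t).1 *
          θf t (μjoint Ql Qf θl θf Q1l Q1f a t) x.2 (a t).2) →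
      ∀ x' : Xl × Xf,
        μjoint Ql Qf θl θf Q1l Q1f a (t + 1) x'
          = (∑ x : Xl × Xf, μjoint Ql Qf θl θf Q1l Q1f a t x *
              θl t (μjoint Ql Qf θl θf Q1l Q1f a t) x.1 (a t).1 *
              θf t (μjoint Ql Qf θl θf Q1l Q1f a t) x.2 (a t).2 *
              Ql x.1 (a t) x'.1 * Qf x.2 (a t) x'.2) /
            (∑ x : Xl × Xf, μjoint Ql Qf θl θf Q1l Q1f a t x *
              θl t (μjoint Ql Qf θl θf Q1l Q1f a t) x.1 (a t).1 *
              θf t (μjoint Ql Qf θl θf Q1l Q1f a t) x.2 (a t).2)) := by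
  refine ⟨?_, ?_, ?_, ?_⟩
  · intro t a xfh
    exact ⟨(hθf t _ (xfh t)).1, (hθf t _ (xfh t)).2, fun xfh' h af => by rw [h]⟩
  · intro t a xlh
    exact ⟨(hθl t _ (xlh t)).1, (hθl t _ (xlh t)).2, fun xlh' h al => by rw [h]⟩
  · intro t a
    induction t with
    | zero => exact ⟨Q1l, Q1f, hQ1l, hQ1f, fun x => rfl⟩
    | succ t ih =>
      obtain ⟨pl, pf, hpl, hpf, hprod⟩ := ih
      have he : μjoint Ql Qf θl θf Q1l Q1f a t = fun x => pl x.1 * pf x.2 := funext hprod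
      obtain ⟨pl', pf', hpl', hpf', hprod'⟩ := Fjoint_product Ql Qf hQl hQf pl pf hpl hpf
        (θl t (μjoint Ql Qf θl θf Q1l Q1f a t)) (θf t (μjoint Ql Qf θl θf Q1l Q1f a t))
        (fun xl al => (hθl t _ xl).1 al) (fun xf af => (hθf t _ xf).1 af) (a t)
      refine ⟨pl', pf', hpl', hpf', fun x' => ?_⟩
      show Fjoint Ql Qf (μjoint Ql Qf θl θf Q1l Q1f a t)
        (θl t (μjoint Ql Qf θl θf Q1l Q1f a t))
        (θf t (μjoint Ql Qf θl θf Q1l Q1f a t)) (a t) x' = pl' x'.1 * pf' x'.2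
      rw [he] at hprod' ⊢
      exact hprod' x'
  · intro t a hpos x'
    show Fjoint Ql Qf (μjoint Ql Qf θl θf Q1l Q1f a t)
      (θl t (μjoint Ql Qf θl θf Q1l Q1f a t))
      (θf t (μjoint Ql Qf θl θf Q1l Q1f a t)) (a t) x' = _
    unfold Fjoint
    rw [if_pos hpos]

end
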